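/- arXiv:math/0407521 — 2 statements merged into one kernel-verified Lean document; each statement's English description precedes it below -/
import Mathlib

section
/- Let P(t, M) ∈ ℤ[t^{±1}, M^{±1}] be a nonzero Laurent polynomial in two variables. Then there exists N such that for all n ≥ N, the breadth of the one-variable Laurent polynomial P(t, t^{−2−2n}) minus the breadth of P(t, t^{2n}) is a constant independent of n. -/
/-!
Write `P = Σ_k a_k(t) M^k`. Once `|s|` exceeds the spread of the `t`-degrees of all the `a_k`,
the top and the bottom term of `P(t, t^s) = Σ_k a_k(t) t^{sk}` each come from a single extreme
`M`-degree: for `s > 0` the top from the largest `k` and the bottom from the smallest, for `s < 0`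
the other way round. So for `|s|` large the breadth is linear in `|s|` with the same slope
`k_max - k_min` on both sides, and since `|-2-2n| - |2n| = 2` the `n`-dependence cancels in the
difference.
-/

/-- The breadth `d₊ − d₋` of a nonzero Laurent polynomial (junk value `0` for `0`). -/
noncomputable def breadthL (f : LaurentPolynomial ℤ) : ℤ :=
  if h : f.coeff.support.Nonempty then f.coeff.support.max' h - f.coeff.support.min' h else 0

/-- Substitution `M = t^s` in a two-variable Laurent polynomial
`P = Σ_k a_k(t) M^k ∈ ℤ[t^{±1}, M^{±1}]`, encoded with outer variable `M` and
coefficients in `ℤ[t^{±1}]`: `subM P s = Σ_k a_k(t) t^{s k}`. -/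
noncomputable def subM (P : LaurentPolynomial (LaurentPolynomial ℤ)) (s : ℤ) :
    LaurentPolynomial ℤ :=
  P.coeff.sum fun k a => a * LaurentPolynomial.T (s * k)

open LaurentPolynomial

namespace LaurentPolynomial

variable {R : Type*} [Semiring R] {f : R[T;T⁻¹]} {c d : ℤ}

-- Both default to `0` on the zero polynomial, as `breadthL` does.
noncomputable def topDeg (f : R[T;T⁻¹]) : ℤ :=
  if h : f.coeff.support.Nonempty then f.coeff.support.max' h else 0

noncomputable def botDeg (f : R[T;T⁻¹]) : ℤ :=
  if h : f.coeff.support.Nonempty then f.coeff.support.min' h else 0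

theorem coeff_support_nonempty (hf : f ≠ 0) : f.coeff.support.Nonempty :=
  Finsupp.support_nonempty_iff.mpr (mt AddMonoidAlgebra.coeff_eq_zero.mp hf)

theorem coeff_topDeg_ne_zero (hf : f ≠ 0) : f.coeff f.topDeg ≠ 0 := by
  have h := coeff_support_nonempty hf
  rw [topDeg, dif_pos h, ← Finsupp.mem_support_iff]
  exact f.coeff.support.max'_mem h

theorem coeff_botDeg_ne_zero (hf : f ≠ 0) : f.coeff f.botDeg ≠ 0 := by
  have h := coeff_support_nonempty hf
  rw [botDeg, dif_pos h, ← Finsupp.mem_support_iff]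
  exact f.coeff.support.min'_mem h

theorem le_topDeg (hd : f.coeff d ≠ 0) : d ≤ f.topDeg := by
  rw [← Finsupp.mem_support_iff] at hd
  rw [topDeg, dif_pos ⟨d, hd⟩]
  exact f.coeff.support.le_max' d hd

theorem botDeg_le (hd : f.coeff d ≠ 0) : f.botDeg ≤ d := by
  rw [← Finsupp.mem_support_iff] at hd
  rw [botDeg, dif_pos ⟨d, hd⟩]
  exact f.coeff.support.min'_le d hd

theorem botDeg_le_topDeg (f : R[T;T⁻¹]) : f.botDeg ≤ f.topDeg := by
  by_cases hf : f = 0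
  · simp [hf, topDeg, botDeg]
  · exact botDeg_le (coeff_topDeg_ne_zero hf)

theorem topDeg_eq (hc : f.coeff c ≠ 0) (h : ∀ d, f.coeff d ≠ 0 → d ≤ c) : f.topDeg = c :=
  le_antisymm (h _ (coeff_topDeg_ne_zero fun hf => hc (by simp [hf]))) (le_topDeg hc)

theorem botDeg_eq (hc : f.coeff c ≠ 0) (h : ∀ d, f.coeff d ≠ 0 → c ≤ d) : f.botDeg = c :=
  le_antisymm (botDeg_le hc) (h _ (coeff_botDeg_ne_zero fun hf => hc (by simp [hf])))

end LaurentPolynomial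

theorem breadthL_eq_topDeg_sub_botDeg (f : LaurentPolynomial ℤ) :
    breadthL f = f.topDeg - f.botDeg := by
  unfold breadthL topDeg botDeg
  split_ifs <;> simp

section subM

variable {P : LaurentPolynomial (LaurentPolynomial ℤ)} {s c k₀ : ℤ}

theorem coeff_subM (P : LaurentPolynomial (LaurentPolynomial ℤ)) (s c : ℤ) :
    (subM P s).coeff c = ∑ k ∈ P.coeff.support, (P.coeff k).coeff (c - s * k) := by
  rw [subM, Finsupp.sum, AddMonoidAlgebra.coeff_sum, Finset.sum_apply']
  refine Finset.sum_congr rfl fun k _ => ?_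
  rw [T, AddMonoidAlgebra.coeff_mul_single_apply, mul_one, sub_eq_add_neg]

theorem exists_coeff_ne_zero_of_coeff_subM_ne_zero (hc : (subM P s).coeff c ≠ 0) :
    ∃ k ∈ P.coeff.support, (P.coeff k).coeff (c - s * k) ≠ 0 := by
  rw [coeff_subM] at hc
  exact Finset.exists_ne_zero_of_sum_ne_zero hc

theorem coeff_subM_eq_of_unique (hk₀ : k₀ ∈ P.coeff.support)
    (h : ∀ k ∈ P.coeff.support, k ≠ k₀ → (P.coeff k).coeff (c - s * k) = 0) :
    (subM P s).coeff c = (P.coeff k₀).coeff (c - s * k₀) := by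
  rw [coeff_subM, Finset.sum_eq_single_of_mem k₀ hk₀ h]

theorem topDeg_subM_of_dominant (hk₀ : k₀ ∈ P.coeff.support)
    (h : ∀ k ∈ P.coeff.support, k ≠ k₀ →
      (P.coeff k).topDeg + s * k < (P.coeff k₀).topDeg + s * k₀) :
    subM P s ≠ 0 ∧ (subM P s).topDeg = (P.coeff k₀).topDeg + s * k₀ := by
  have hlead : (subM P s).coeff ((P.coeff k₀).topDeg + s * k₀) ≠ 0 := by
    rw [coeff_subM_eq_of_unique hk₀ fun k hk hne => ?_, add_sub_cancel_right]
    · exact coeff_topDeg_ne_zero (Finsupp.mem_support_iff.mp hk₀)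
    · by_contra hne0
      have := le_topDeg hne0
      linarith [h k hk hne]
  refine ⟨fun h0 => hlead (by simp [h0]), topDeg_eq hlead fun d hd => ?_⟩
  obtain ⟨k, hk, hne0⟩ := exists_coeff_ne_zero_of_coeff_subM_ne_zero hd
  have := le_topDeg hne0
  rcases eq_or_ne k k₀ with rfl | hne
  · linarith
  · linarith [h k hk hne]

theorem botDeg_subM_of_dominant (hk₀ : k₀ ∈ P.coeff.support)
    (h : ∀ k ∈ P.coeff.support, k ≠ k₀ →
      (P.coeff k₀).botDeg + s * k₀ < (P.coeff k).botDeg + s * k) :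
    (subM P s).botDeg = (P.coeff k₀).botDeg + s * k₀ := by
  have hlead : (subM P s).coeff ((P.coeff k₀).botDeg + s * k₀) ≠ 0 := by
    rw [coeff_subM_eq_of_unique hk₀ fun k hk hne => ?_, add_sub_cancel_right]
    · exact coeff_botDeg_ne_zero (Finsupp.mem_support_iff.mp hk₀)
    · by_contra hne0
      have := botDeg_le hne0
      linarith [h k hk hne]
  refine botDeg_eq hlead fun d hd => ?_
  obtain ⟨k, hk, hne0⟩ := exists_coeff_ne_zero_of_coeff_subM_ne_zero hd
  have := botDeg_le hne0
  rcases eq_or_ne k k₀ with rfl | hne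
  · linarith
  · linarith [h k hk hne]

end subM

section bounds

variable {P : LaurentPolynomial (LaurentPolynomial ℤ)} {a A s k₀ k₁ : ℤ}

theorem exists_coeff_degree_bounds (P : LaurentPolynomial (LaurentPolynomial ℤ)) :
    ∃ a A : ℤ, ∀ k ∈ P.coeff.support, a ≤ (P.coeff k).botDeg ∧ (P.coeff k).topDeg ≤ A := by
  obtain ⟨a, ha⟩ := (P.coeff.support.image fun k => (P.coeff k).botDeg).bddBelow
  obtain ⟨A, hA⟩ := (P.coeff.support.image fun k => (P.coeff k).topDeg).bddAbove
  exact ⟨a, A, fun k hk => ⟨ha (Finset.mem_image_of_mem _ hk), hA (Finset.mem_image_of_mem _ hk)⟩⟩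

theorem breadthL_subM_of_dominant
    (hbd : ∀ k ∈ P.coeff.support, a ≤ (P.coeff k).botDeg ∧ (P.coeff k).topDeg ≤ A)
    (hk₁ : k₁ ∈ P.coeff.support) (hk₀ : k₀ ∈ P.coeff.support)
    (htop : ∀ k ∈ P.coeff.support, k ≠ k₁ → A - a < s * (k₁ - k))
    (hbot : ∀ k ∈ P.coeff.support, k ≠ k₀ → A - a < s * (k - k₀)) :
    subM P s ≠ 0 ∧
      breadthL (subM P s) = (P.coeff k₁).topDeg - (P.coeff k₀).botDeg + s * (k₁ - k₀) := by
  obtain ⟨hne, hmax⟩ := topDeg_subM_of_dominant (s := s) hk₁ fun k hk hne => by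
    linarith [hbd k hk, hbd k₁ hk₁, botDeg_le_topDeg (P.coeff k₁), htop k hk hne]
  have hmin := botDeg_subM_of_dominant (s := s) hk₀ fun k hk hne => by
    linarith [hbd k hk, hbd k₀ hk₀, botDeg_le_topDeg (P.coeff k₀), hbot k hk hne]
  refine ⟨hne, ?_⟩
  rw [breadthL_eq_topDeg_sub_botDeg, hmax, hmin]
  ring

theorem breadthL_subM_of_sub_lt (hP : P ≠ 0)
    (hbd : ∀ k ∈ P.coeff.support, a ≤ (P.coeff k).botDeg ∧ (P.coeff k).topDeg ≤ A)
    (hs : A - a < s) :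
    subM P s ≠ 0 ∧ breadthL (subM P s) =
      (P.coeff P.topDeg).topDeg - (P.coeff P.botDeg).botDeg + s * (P.topDeg - P.botDeg) := by
  have hmax := Finsupp.mem_support_iff.mpr (coeff_topDeg_ne_zero hP)
  have hmin := Finsupp.mem_support_iff.mpr (coeff_botDeg_ne_zero hP)
  have hs₀ : 0 ≤ s := by
    linarith [hbd _ hmax, botDeg_le_topDeg (P.coeff P.topDeg)]
  have htop : ∀ k ∈ P.coeff.support, k ≠ P.topDeg → A - a < s * (P.topDeg - k) := by
    intro k hk hne
    have := le_topDeg (Finsupp.mem_support_iff.mp hk)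
    exact hs.trans_le (le_mul_of_one_le_right hs₀ (by omega))
  have hbot : ∀ k ∈ P.coeff.support, k ≠ P.botDeg → A - a < s * (k - P.botDeg) := by
    intro k hk hne
    have := botDeg_le (Finsupp.mem_support_iff.mp hk)
    exact hs.trans_le (le_mul_of_one_le_right hs₀ (by omega))
  exact breadthL_subM_of_dominant hbd hmax hmin htop hbot

theorem breadthL_subM_of_lt_sub (hP : P ≠ 0)
    (hbd : ∀ k ∈ P.coeff.support, a ≤ (P.coeff k).botDeg ∧ (P.coeff k).topDeg ≤ A)
    (hs : s < a - A) :
    subM P s ≠ 0 ∧ breadthL (subM P s) =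
      (P.coeff P.botDeg).topDeg - (P.coeff P.topDeg).botDeg - s * (P.topDeg - P.botDeg) := by
  have hmax := Finsupp.mem_support_iff.mpr (coeff_topDeg_ne_zero hP)
  have hmin := Finsupp.mem_support_iff.mpr (coeff_botDeg_ne_zero hP)
  have hs₀ : 0 ≤ -s := by
    linarith [hbd _ hmax, botDeg_le_topDeg (P.coeff P.topDeg)]
  have hs' : A - a < -s := by linarith
  have htop : ∀ k ∈ P.coeff.support, k ≠ P.botDeg → A - a < s * (P.botDeg - k) := by
    intro k hk hne
    have := botDeg_le (Finsupp.mem_support_iff.mp hk)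
    rw [show s * (P.botDeg - k) = -s * (k - P.botDeg) by ring]
    exact hs'.trans_le (le_mul_of_one_le_right hs₀ (by omega))
  have hbot : ∀ k ∈ P.coeff.support, k ≠ P.topDeg → A - a < s * (k - P.topDeg) := by
    intro k hk hne
    have := le_topDeg (Finsupp.mem_support_iff.mp hk)
    rw [show s * (k - P.topDeg) = -s * (P.topDeg - k) by ring]
    exact hs'.trans_le (le_mul_of_one_le_right hs₀ (by omega))
  obtain ⟨hne, hbreadth⟩ := breadthL_subM_of_dominant hbd hmin hmax htop hbot
  exact ⟨hne, by rw [hbreadth]; ring⟩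

end bounds

/-- For a nonzero `P(t, M) ∈ ℤ[t^{±1}, M^{±1}]`, the difference of breadths
`breadth(P(t, t^{−2−2n})) − breadth(P(t, t^{2n}))` is eventually a constant
independent of `n` (and both substituted polynomials are eventually nonzero). -/
theorem breadth_difference_eventually_constant
    (P : LaurentPolynomial (LaurentPolynomial ℤ)) (hP : P ≠ 0) :
    ∃ (c : ℤ) (N : ℕ), ∀ n : ℕ, N ≤ n →
      subM P (-2 - 2 * (n : ℤ)) ≠ 0 ∧ subM P (2 * (n : ℤ)) ≠ 0 ∧
      breadthL (subM P (-2 - 2 * (n : ℤ))) - breadthL (subM P (2 * (n : ℤ))) = c := by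
  obtain ⟨a, A, hbd⟩ := exists_coeff_degree_bounds P
  refine ⟨(P.coeff P.botDeg).topDeg - (P.coeff P.topDeg).botDeg
      - ((P.coeff P.topDeg).topDeg - (P.coeff P.botDeg).botDeg) + 2 * (P.topDeg - P.botDeg),
    (A - a).toNat + 1, fun n hn => ?_⟩
  have hlarge : A - a < 2 * (n : ℤ) := by
    have := Int.self_le_toNat (A - a)
    omega
  obtain ⟨hne₁, hb₁⟩ := breadthL_subM_of_lt_sub (s := -2 - 2 * (n : ℤ)) hP hbd (by linarith)
  obtain ⟨hne₂, hb₂⟩ := breadthL_subM_of_sub_lt hP hbd hlarge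
  exact ⟨hne₁, hne₂, by rw [hb₁, hb₂]; ring⟩
end

section
/- Let g(t,M), γ(t,M,L), α(t,M,L), β(t,M,L) be elements with integer Laurent-polynomial coefficients satisfying g·β = γ·α in the quantum torus over ℤ[t^{±1}], where the coefficients of powers of L in α are coprime as elements of ℤ[t^{±1},M]. If t+1 divides g but not γ, then t+1 divides all coefficients of α, contradicting coprimality; hence g and γ can be chosen so that g(−1,M) ≠ 0. -/
/-- Coefficient ring `ℤ[t^{±1}][M^{±1}]` of the quantum torus (outer variable `M`). -/
noncomputable abbrev CMt : Type := LaurentPolynomial (LaurentPolynomial ℤ)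

/-- The automorphism power `σ^j` of `ℤ[t^{±1}][M^{±1}]` induced by conjugation by
`L^j` in the quantum torus: it multiplies the coefficient of `M^k` by `t^{2jk}`. -/
noncomputable def sigmaPow (j : ℤ) (c : CMt) : CMt :=
  Finsupp.sum (AddMonoidAlgebra.coeff c) fun k a =>
    AddMonoidAlgebra.ofCoeff
      (Finsupp.single k (LaurentPolynomial.T (2 * j * k) * a) : ℤ →₀ LaurentPolynomial ℤ)

/-- Multiplication in the quantum torus `ℤ[t^{±1}]⟨L^{±1}, M^{±1}⟩/(LM = t²ML)`,
with elements encoded as finitely supported functions `ℤ →₀ ℤ[t^{±1}][M^{±1}]`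
recording the coefficient of each power of `L`. -/
noncomputable def qMul (f g : ℤ →₀ CMt) : ℤ →₀ CMt :=
  f.sum fun i a => g.sum fun j b => Finsupp.single (i + j) (a * sigmaPow i b)

/-- `t + 1` as an element of `ℤ[t^{±1}][M^{±1}]`. -/
noncomputable def tPlusOne : CMt :=
  LaurentPolynomial.C (LaurentPolynomial.T 1 + 1)

/-!
Setting `t = -1` in every coefficient turns the relation `LM = t²ML` into `LM = ML`, so it
defines a ring homomorphism from the quantum torus to the commutative Laurent polynomial
ring `ℤ[M^{±1}][L^{±1}]`, an integral domain. An element is killed by this reduction exactly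
when `t + 1` divides all of its coefficients. Reducing `g β = γ α` with `t + 1 ∣ g` gives
`0 = γ̄ ᾱ` with `γ̄ ≠ 0`, hence `ᾱ = 0`.
-/

open LaurentPolynomial

namespace LaurentPolynomial

variable {R : Type*}

theorem C_dvd_iff_dvd_coeff [CommSemiring R] (a : R) (f : R[T;T⁻¹]) :
    C a ∣ f ↔ ∀ n, a ∣ f.coeff n := by
  constructor
  · rintro ⟨g, rfl⟩ n
    rw [← single_eq_C, AddMonoidAlgebra.coeff_single_zero_mul]
    exact dvd_mul_right a _
  · intro h
    rw [← AddMonoidAlgebra.sum_coeff_single f]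
    refine Finset.dvd_sum fun n _ => ?_
    rw [single_eq_C_mul_T]
    exact (map_dvd C (h n)).mul_right _

theorem T_one_sub_C_dvd_iff [CommRing R] (u : Rˣ) (p : R[T;T⁻¹]) :
    T 1 - C (u : R) ∣ p ↔ eval₂ (RingHom.id R) u p = 0 := by
  constructor
  · rintro ⟨d, rfl⟩
    simp
  · intro hp
    obtain ⟨n, q, hq⟩ := p.exists_T_pow
    have hroot : q.IsRoot (u : R) := by
      rw [Polynomial.IsRoot, ← Polynomial.eval₂_id, ← eval₂_toLaurent, hq, map_mul, hp,
        zero_mul]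
    have hdvd : T 1 - C (u : R) ∣ p * T n := by
      rw [← hq, ← Polynomial.toLaurent_X, ← Polynomial.toLaurent_C, ← map_sub]
      exact map_dvd _ (Polynomial.dvd_iff_isRoot.mpr hroot)
    exact (IsUnit.dvd_mul_right (isUnit_T _)).mp hdvd

end LaurentPolynomial

noncomputable def evalNegOne : ℤ[T;T⁻¹] →+* ℤ :=
  eval₂ (RingHom.id ℤ) (-1)

theorem T_one_add_one_dvd_iff (p : ℤ[T;T⁻¹]) : T 1 + 1 ∣ p ↔ evalNegOne p = 0 := by
  have hT : (T 1 + 1 : ℤ[T;T⁻¹]) = T 1 - C ((-1 : ℤˣ) : ℤ) := by simp [sub_eq_add_neg]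
  rw [hT, T_one_sub_C_dvd_iff]
  rfl

theorem evalNegOne_T_two_mul (n : ℤ) : evalNegOne (T (2 * n)) = 1 := by
  simp [evalNegOne, zpow_mul]

noncomputable def reduceNegOne : CMt →+* ℤ[T;T⁻¹] :=
  AddMonoidAlgebra.mapRingHom ℤ evalNegOne

theorem tPlusOne_dvd_iff (c : CMt) : tPlusOne ∣ c ↔ reduceNegOne c = 0 := by
  simp only [tPlusOne, C_dvd_iff_dvd_coeff, T_one_add_one_dvd_iff]
  rw [LaurentPolynomial.ext_iff]
  simp [reduceNegOne]

theorem reduceNegOne_sigmaPow (j : ℤ) (c : CMt) :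
    reduceNegOne (sigmaPow j c) = reduceNegOne c := by
  conv_rhs => rw [← AddMonoidAlgebra.sum_coeff_single c]
  rw [sigmaPow, map_finsuppSum, map_finsuppSum]
  refine Finsupp.sum_congr fun k _ => ?_
  rw [AddMonoidAlgebra.ofCoeff_single, reduceNegOne, AddMonoidAlgebra.mapRingHom_single,
    AddMonoidAlgebra.mapRingHom_single, map_mul, mul_assoc, evalNegOne_T_two_mul, one_mul]

noncomputable def reduceTorus : (ℤ →₀ CMt) →+ ℤ[T;T⁻¹][T;T⁻¹] :=
  AddMonoidAlgebra.coeffAddEquiv.symm.toAddMonoidHom.comp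
    (Finsupp.mapRange.addMonoidHom reduceNegOne.toAddMonoidHom)

theorem reduceTorus_single (i : ℤ) (c : CMt) :
    reduceTorus (Finsupp.single i c) = AddMonoidAlgebra.single i (reduceNegOne c) := by
  simp [reduceTorus]

theorem reduceTorus_eq_zero_iff (f : ℤ →₀ CMt) :
    reduceTorus f = 0 ↔ ∀ i, tPlusOne ∣ f i := by
  simp [reduceTorus, tPlusOne_dvd_iff, Finsupp.ext_iff]

theorem reduceTorus_qMul (f g : ℤ →₀ CMt) :
    reduceTorus (qMul f g) = reduceTorus f * reduceTorus g := by
  conv_rhs => rw [← f.sum_single, ← g.sum_single, map_finsuppSum, Finsupp.sum_mul]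
  simp only [qMul, map_finsuppSum, Finsupp.mul_sum, reduceTorus_single,
    AddMonoidAlgebra.single_mul_single, map_mul, reduceNegOne_sigmaPow]

/-- If `g β = γ α` holds in the quantum torus over `ℤ[t^{±1}]` (with `g = g(t,M)`
containing no `L`), and `t + 1` divides `g` but does not divide all coefficients of
`γ`, then `t + 1` divides all coefficients of `α` — contradicting the coprimality of
the coefficients of `α`; hence in the relation `g β = γ α` one can choose `g, γ`
with `g(−1, M) ≠ 0`. -/
theorem tPlusOne_dvd_alpha
    (g : CMt) (γ α β : ℤ →₀ CMt)
    (hrel : qMul (Finsupp.single 0 g) β = qMul γ α)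
    (hg : tPlusOne ∣ g)
    (hγ : ¬ ∀ i : ℤ, tPlusOne ∣ γ i) :
    ∀ i : ℤ, tPlusOne ∣ α i := by
  have hmul : reduceTorus γ * reduceTorus α = 0 := by
    rw [← reduceTorus_qMul, ← hrel, reduceTorus_qMul, reduceTorus_single,
      (tPlusOne_dvd_iff g).1 hg, AddMonoidAlgebra.single_zero, zero_mul]
  rw [← reduceTorus_eq_zero_iff] at hγ ⊢
  exact (mul_eq_zero.1 hmul).resolve_left hγ
end
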